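/- Let L be a diameter transverse to L₀ with transverse intersection points x₁, …, x_N, and let x₀ = x_i with 1 < i < N satisfy μ(x₀, L) = μ_min(L). Then exactly one of x_{i−1}, x_{i+1} lies to the left of x₀ on L₀ and the other lies to the right; moreover the arc of L joining x₀ to its left neighbour lies in the closure of D⁺, and the arc of L joining x₀ to its right neighbour lies in the closure of D⁻. -/

import Mathlib

open Set MeasureTheory Bornology

noncomputable section

/-- The open unit disk `D` in `ℝ²`. -/
def Disk : Set (ℝ × ℝ) := {p | p.1 ^ 2 + p.2 ^ 2 < 1}

/-- The standard diameter `L₀ = D ∩ (ℝ × {0})`. -/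
def stdDiam : Set (ℝ × ℝ) := {p | p.1 ^ 2 < 1 ∧ p.2 = 0}

/-- The open upper half-disk `D⁺`. -/
def Dplus : Set (ℝ × ℝ) := {p | p ∈ Disk ∧ 0 < p.2}

/-- The open lower half-disk `D⁻`. -/
def Dminus : Set (ℝ × ℝ) := {p | p ∈ Disk ∧ p.2 < 0}

/-- Area with respect to ω = (1/π) dx∧dy : Lebesgue area divided by π. -/
def symArea (S : Set (ℝ × ℝ)) : ℝ := (volume S).toReal / Real.pi

/-- The Hamiltonian vector field `X_{H_t} = π (∂H_t/∂y, −∂H_t/∂x)`. -/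
def hamVF (H : ℝ → ℝ × ℝ → ℝ) (t : ℝ) (p : ℝ × ℝ) : ℝ × ℝ :=
  (Real.pi * fderiv ℝ (H t) p (0, 1), -(Real.pi * fderiv ℝ (H t) p (1, 0)))

/-- A smooth time-dependent Hamiltonian, compactly supported inside the disk. -/
structure IsAdmissible (H : ℝ → ℝ × ℝ → ℝ) : Prop where
  smooth : ContDiff ℝ (⊤ : ℕ∞) (Function.uncurry H)
  support : ∃ K : Set (ℝ × ℝ), IsCompact K ∧ K ⊆ Disk ∧ ∀ t p, p ∉ K → H t p = 0

/-- `φ` is the Hamiltonian isotopy generated by `H`. -/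
structure IsHamIsotopy (H : ℝ → ℝ × ℝ → ℝ) (φ : ℝ → ℝ × ℝ → ℝ × ℝ) : Prop where
  admissible : IsAdmissible H
  init : φ 0 = id
  deriv : ∀ p t, HasDerivAt (fun s => φ s p) (hamVF H t (φ t p)) t
  bij : ∀ t, Function.Bijective (φ t)

/-- A Hamiltonian diffeomorphism: a time-one map of a Hamiltonian isotopy. -/
def IsHamDiffeo (f : ℝ × ℝ → ℝ × ℝ) : Prop := ∃ H φ, IsHamIsotopy H φ ∧ φ 1 = f

/-- A diameter: image of the standard diameter by a Hamiltonian diffeomorphism. -/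
def IsDiameter (L : Set (ℝ × ℝ)) : Prop := ∃ f, IsHamDiffeo f ∧ L = f '' stdDiam

/-- Hofer energy of the isotopy generated by `H`. -/
def energy (H : ℝ → ℝ × ℝ → ℝ) : ℝ :=
  ∫ t in (0:ℝ)..1, (sSup (H t '' Disk) - sInf (H t '' Disk))

/-- Hofer distance between two subsets of the disk. -/
def hoferDist (L1 L2 : Set (ℝ × ℝ)) : ℝ :=
  sInf {e | ∃ H φ, IsHamIsotopy H φ ∧ φ 1 '' L1 = L2 ∧ e = energy H}

/-- Hofer energy (norm) of a Hamiltonian diffeomorphism. -/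
def hoferNorm (f : ℝ × ℝ → ℝ × ℝ) : ℝ :=
  sInf {e | ∃ H φ, IsHamIsotopy H φ ∧ φ 1 = f ∧ e = energy H}

/-- A diameter transverse to the standard diameter, together with all the
combinatorial data of its intersection pattern with `L₀`:
`f` is a Hamiltonian diffeomorphism with `L = f '' L₀`, the curve `L` is
parametrized by `s ↦ f (s, 0)`, the transverse intersection points are the
`f (t i, 0)` (ordered along `L` by the parameter), `L` coincides with `L₀`
near the ends, and each open arc between consecutive intersection points lies
in one of the open half-planes. -/
structure TransverseConfig where
  f : ℝ × ℝ → ℝ × ℝ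
  hf : IsHamDiffeo f
  N : ℕ
  hN : 0 < N
  t : Fin N → ℝ
  ε : ℝ
  ε' : ℝ
  hε : 0 < ε
  hε' : 0 < ε'
  hεlt : -1 + ε < 1 - ε'
  ht : StrictMono t
  htmem : ∀ i, t i ∈ Ioo (-1 + ε) (1 - ε')
  fixleft : ∀ x ∈ Ioc (-1 : ℝ) (-1 + ε), f (x, 0) = (x, 0)
  fixright : ∀ x ∈ Ico (1 - ε') (1 : ℝ), f (x, 0) = (x, 0)
  inDisk : ∀ x ∈ Ioo (-1 : ℝ) 1, f (x, 0) ∈ Disk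
  onL0 : ∀ i, (f (t i, 0)).2 = 0
  offL0 : ∀ x ∈ Ioo (-1 + ε) (1 - ε'), (f (x, 0)).2 = 0 → ∃ i, x = t i
  v : Fin N → ℝ × ℝ
  hv : ∀ i, HasDerivAt (fun s => f (s, 0)) (v i) (t i)
  transv : ∀ i, (v i).2 ≠ 0
  arcs : ∀ i : Fin N, ∀ h : i.val + 1 < N,
      ((fun s => f (s, 0)) '' Ioo (t i) (t ⟨i.val + 1, h⟩) ⊆ {p : ℝ × ℝ | 0 < p.2}) ∨
      ((fun s => f (s, 0)) '' Ioo (t i) (t ⟨i.val + 1, h⟩) ⊆ {p : ℝ × ℝ | p.2 < 0})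

namespace TransverseConfig

/-- The parametrization of the diameter. -/
def γ (C : TransverseConfig) : ℝ → ℝ × ℝ := fun s => C.f (s, 0)

/-- The `i`-th transverse intersection point (ordered along `L`). -/
def pt (C : TransverseConfig) (i : Fin C.N) : ℝ × ℝ := C.f (C.t i, 0)

/-- Index `k` clamped into `Fin N`. -/
def idx (C : TransverseConfig) (k : ℕ) : Fin C.N :=
  ⟨min k (C.N - 1), by have := C.hN; omega⟩

/-- The diameter itself, as a subset of the plane. -/
def carrier (C : TransverseConfig) : Set (ℝ × ℝ) := C.f '' stdDiam

end TransverseConfig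

open Classical in
/-- The index jump `δ` between two intersection points consecutive along `L`. -/
def maslovδ (C : TransverseConfig) (i j : Fin C.N) : ℤ :=
  if ((∀ s ∈ Ioo (C.t i) (C.t j), (C.γ s).2 < 0) ∧ (C.pt i).1 < (C.pt j).1) ∨
      ((∀ s ∈ Ioo (C.t i) (C.t j), 0 < (C.γ s).2) ∧ (C.pt j).1 < (C.pt i).1)
    then 1 else -1

open Classical in
/-- The Maslov index `μ(x_i, L)`, normalized by `μ(x₁, L) = 0`. -/
def maslov (C : TransverseConfig) (i : Fin C.N) : ℤ :=
  ∑ j ∈ Finset.range i.val,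
    if h : j + 1 < C.N then maslovδ C ⟨j, Nat.lt_of_succ_lt h⟩ ⟨j + 1, h⟩ else 0

/-- `μ_max`. -/
def μmax (C : TransverseConfig) : ℤ :=
  Finset.univ.sup' (Finset.univ_nonempty_iff.mpr (Fin.pos_iff_nonempty.mp C.hN)) (maslov C)

/-- `μ_min`. -/
def μmin (C : TransverseConfig) : ℤ :=
  Finset.univ.inf' (Finset.univ_nonempty_iff.mpr (Fin.pos_iff_nonempty.mp C.hN)) (maslov C)

/-- The closed curve formed by the arc of `L` between the intersection points
`x_i` and `x_j` together with the segment of the `x`-axis between them. -/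
def loopSet (C : TransverseConfig) (i j : Fin C.N) : Set (ℝ × ℝ) :=
  (C.γ '' Icc (C.t i) (C.t j)) ∪
    ((fun x => (x, (0 : ℝ))) '' Icc (min (C.pt i).1 (C.pt j).1) (max (C.pt i).1 (C.pt j).1))

/-- The closed region bounded by `loopSet C i j`: the loop together with the
bounded connected components of its complement. -/
def regionOf (C : TransverseConfig) (i j : Fin C.N) : Set (ℝ × ℝ) :=
  loopSet C i j ∪ {p | IsBounded (connectedComponentIn (loopSet C i j)ᶜ p)}

/-- The region associated to `x_i` and its predecessor along `L`. -/
def regA (C : TransverseConfig) (i : Fin C.N) : Set (ℝ × ℝ) :=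
  regionOf C (C.idx (i.val - 1)) i

/-- The region associated to `x_i` and its successor along `L`. -/
def regB (C : TransverseConfig) (i : Fin C.N) : Set (ℝ × ℝ) :=
  regionOf C i (C.idx (i.val + 1))

open Classical in
/-- The small region `r(x_i)`: the one of the two regions at `x_i` of smaller area. -/
def smallRegion (C : TransverseConfig) (i : Fin C.N) : Set (ℝ × ℝ) :=
  if symArea (regA C i) ≤ symArea (regB C i) then regA C i else regB C i

open Classical in
/-- The large region `R(x_i)`. -/
def largeRegion (C : TransverseConfig) (i : Fin C.N) : Set (ℝ × ℝ) :=
  if symArea (regA C i) ≤ symArea (regB C i) then regB C i else regA C i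

/-- The weight `w(x_i)`: the area of the small region. -/
def weight (C : TransverseConfig) (i : Fin C.N) : ℝ := symArea (smallRegion C i)

/-- `x_i` is an interior intersection point (has two neighbours on `L`). -/
def interiorIdx (C : TransverseConfig) (i : Fin C.N) : Prop := 0 < i.val ∧ i.val + 1 < C.N

open Classical in
/-- The neighbour of `x_i` along `L` lying to the right of `x_i` on `L₀`. -/
def rightNbr (C : TransverseConfig) (i : Fin C.N) : Fin C.N :=
  if (C.pt i).1 < (C.pt (C.idx (i.val + 1))).1 then C.idx (i.val + 1) else C.idx (i.val - 1)

/-- `M(L)`: intersection points of minimal Maslov index. -/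
def Mset (C : TransverseConfig) : Set (Fin C.N) := {i | maslov C i = μmin C}

/-- `M⁻(L)`: minimal-index points whose small region lies in the closure of `D⁻`. -/
def MminusSet (C : TransverseConfig) : Set (Fin C.N) :=
  {i | interiorIdx C i ∧ maslov C i = μmin C ∧ smallRegion C i ⊆ closure Dminus}

/-- `M⁺(L)`: minimal-index points whose small region lies in the closure of `D⁺`. -/
def MplusSet (C : TransverseConfig) : Set (Fin C.N) :=
  {i | interiorIdx C i ∧ maslov C i = μmin C ∧ smallRegion C i ⊆ closure Dplus}

/-- A half-disk: the intersection of a smoothly embedded closed disk with the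
closure of `D⁺` or of `D⁻`. -/
def IsHalfDisk (A : Set (ℝ × ℝ)) : Prop :=
  ∃ g : ℝ × ℝ → ℝ × ℝ, ContDiff ℝ (⊤ : ℕ∞) g ∧ Function.Injective g ∧
    (A = g '' Metric.closedBall 0 1 ∩ closure Dplus ∨
      A = g '' Metric.closedBall 0 1 ∩ closure Dminus)

/-- `C'` has the same Maslov index gaps as `C` on common intersection points. -/
def preservesGaps (C C' : TransverseConfig) : Prop :=
  ∀ (u v : Fin C.N) (u' v' : Fin C'.N),
    C'.pt u' = C.pt u → C'.pt v' = C.pt v →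
    maslov C' v' - maslov C' u' = maslov C v - maslov C u

/-- The Hamiltonian vector field on `(ℝ², dx∧dy)` : `X_H = (∂H/∂y, −∂H/∂x)`. -/
def hamVF0 (H : ℝ × ℝ → ℝ) (p : ℝ × ℝ) : ℝ × ℝ :=
  (fderiv ℝ H p (0, 1), -(fderiv ℝ H p (1, 0)))

/-- Rotation of the plane about the origin by angle `θ`. -/
def rot (θ : ℝ) (p : ℝ × ℝ) : ℝ × ℝ :=
  (Real.cos θ * p.1 - Real.sin θ * p.2, Real.sin θ * p.1 + Real.cos θ * p.2)

section Aux

lemma mem_closure_Dplus {p : ℝ × ℝ} (hp : p ∈ Disk) (hy : 0 ≤ p.2) :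
    p ∈ closure Dplus := by
  have hr : p.1 ^ 2 + p.2 ^ 2 < 1 := hp
  rw [Metric.mem_closure_iff]
  intro ε hε
  have h1 : 0 < 1 - (p.1 ^ 2 + p.2 ^ 2) := by linarith
  set δ : ℝ := min (ε / 2) (min ((1 - (p.1 ^ 2 + p.2 ^ 2)) / 4) 1) with hδdef
  have hδpos : 0 < δ := by
    apply lt_min (by linarith)
    exact lt_min (by linarith) one_pos
  have hδ1 : δ ≤ (1 - (p.1 ^ 2 + p.2 ^ 2)) / 4 := le_trans (min_le_right _ _) (min_le_left _ _)
  have hδ2 : δ ≤ 1 := le_trans (min_le_right _ _) (min_le_right _ _)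
  refine ⟨(p.1, p.2 + δ), ⟨?_, by simpa using by linarith⟩, ?_⟩
  · show p.1 ^ 2 + (p.2 + δ) ^ 2 < 1
    have hy1 : p.2 < 1 := by nlinarith [sq_nonneg p.1, sq_nonneg (p.2 - 1)]
    nlinarith
  · rw [Prod.dist_eq]
    simp only [Real.dist_eq]
    have : |p.2 - (p.2 + δ)| = δ := by rw [abs_sub_comm]; simp [abs_of_nonneg hδpos.le]
    simp only [sub_self, abs_zero, this]
    have : max 0 δ = δ := max_eq_right hδpos.le
    rw [this]
    calc δ ≤ ε / 2 := min_le_left _ _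
      _ < ε := by linarith

lemma mem_closure_Dminus {p : ℝ × ℝ} (hp : p ∈ Disk) (hy : p.2 ≤ 0) :
    p ∈ closure Dminus := by
  have hr : p.1 ^ 2 + p.2 ^ 2 < 1 := hp
  rw [Metric.mem_closure_iff]
  intro ε hε
  have h1 : 0 < 1 - (p.1 ^ 2 + p.2 ^ 2) := by linarith
  set δ : ℝ := min (ε / 2) (min ((1 - (p.1 ^ 2 + p.2 ^ 2)) / 4) 1) with hδdef
  have hδpos : 0 < δ := by
    apply lt_min (by linarith)
    exact lt_min (by linarith) one_pos
  have hδ1 : δ ≤ (1 - (p.1 ^ 2 + p.2 ^ 2)) / 4 := le_trans (min_le_right _ _) (min_le_left _ _)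
  have hδ2 : δ ≤ 1 := le_trans (min_le_right _ _) (min_le_right _ _)
  refine ⟨(p.1, p.2 - δ), ⟨?_, by simpa using by linarith⟩, ?_⟩
  · show p.1 ^ 2 + (p.2 - δ) ^ 2 < 1
    have hy1 : -1 < p.2 := by nlinarith [sq_nonneg p.1, sq_nonneg (p.2 + 1)]
    nlinarith
  · rw [Prod.dist_eq]
    simp only [Real.dist_eq]
    have : |p.2 - (p.2 - δ)| = δ := by simp [abs_of_nonneg hδpos.le]
    simp only [sub_self, abs_zero, this]
    have : max 0 δ = δ := max_eq_right hδpos.le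
    rw [this]
    calc δ ≤ ε / 2 := min_le_left _ _
      _ < ε := by linarith

namespace TransverseConfig

@[simp] lemma γ_apply (C : TransverseConfig) (s : ℝ) : C.γ s = C.f (s, 0) := rfl

@[simp] lemma pt_apply (C : TransverseConfig) (a : Fin C.N) : C.pt a = C.f (C.t a, 0) := rfl

lemma f_injective (C : TransverseConfig) : Function.Injective C.f := by
  obtain ⟨H, φ, hiso, hφ⟩ := C.hf
  exact hφ ▸ (hiso.bij 1).injective

lemma pt_fst_ne (C : TransverseConfig) {a b : Fin C.N} (h : C.t a ≠ C.t b) :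
    (C.pt a).1 ≠ (C.pt b).1 := by
  intro he
  apply h
  have hab : C.pt a = C.pt b :=
    Prod.ext he (by rw [pt_apply, pt_apply, C.onL0 a, C.onL0 b])
  rw [pt_apply, pt_apply] at hab
  have := C.f_injective hab
  exact (Prod.ext_iff.mp this).1

lemma maslov_succ (C : TransverseConfig) (a : Fin C.N) (h : a.val + 1 < C.N) :
    maslov C ⟨a.val + 1, h⟩ = maslov C a + maslovδ C a ⟨a.val + 1, h⟩ := by
  unfold maslov
  rw [Finset.sum_range_succ, dif_pos h]

lemma deriv_snd (C : TransverseConfig) (a : Fin C.N) :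
    HasDerivAt (fun s => (C.γ s).2) (C.v a).2 (C.t a) := by
  have := (hasFDerivAt_snd (𝕜 := ℝ) (E := ℝ) (F := ℝ)).comp_hasDerivAt _ (C.hv a)
  exact this

lemma no_both_pos (C : TransverseConfig) {a i b : Fin C.N}
    (hab : C.t a < C.t i) (hib : C.t i < C.t b)
    (h1 : ∀ s ∈ Ioo (C.t a) (C.t i), 0 < (C.γ s).2)
    (h2 : ∀ s ∈ Ioo (C.t i) (C.t b), 0 < (C.γ s).2) : False := by
  have hg := C.deriv_snd i
  have hloc : IsLocalMin (fun s => (C.γ s).2) (C.t i) := by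
    have h0 : (C.γ (C.t i)).2 = 0 := C.onL0 i
    filter_upwards [Ioo_mem_nhds hab hib] with s hs
    show (C.γ (C.t i)).2 ≤ (C.γ s).2
    rw [h0]
    rcases lt_trichotomy s (C.t i) with h | h | h
    · exact (h1 s ⟨hs.1, h⟩).le
    · rw [h, h0]
    · exact (h2 s ⟨h, hs.2⟩).le
  exact C.transv i (hloc.hasDerivAt_eq_zero hg)

lemma no_both_neg (C : TransverseConfig) {a i b : Fin C.N}
    (hab : C.t a < C.t i) (hib : C.t i < C.t b)
    (h1 : ∀ s ∈ Ioo (C.t a) (C.t i), (C.γ s).2 < 0)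
    (h2 : ∀ s ∈ Ioo (C.t i) (C.t b), (C.γ s).2 < 0) : False := by
  have hg := C.deriv_snd i
  have hloc : IsLocalMax (fun s => (C.γ s).2) (C.t i) := by
    have h0 : (C.γ (C.t i)).2 = 0 := C.onL0 i
    filter_upwards [Ioo_mem_nhds hab hib] with s hs
    show (C.γ s).2 ≤ (C.γ (C.t i)).2
    rw [h0]
    rcases lt_trichotomy s (C.t i) with h | h | h
    · exact (h1 s ⟨hs.1, h⟩).le
    · rw [h, h0]
    · exact (h2 s ⟨h, hs.2⟩).le
  exact C.transv i (hloc.hasDerivAt_eq_zero hg)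

lemma arc_in_disk (C : TransverseConfig) {a b : Fin C.N} {s : ℝ}
    (hs : s ∈ Icc (C.t a) (C.t b)) : C.γ s ∈ Disk := by
  have ha := C.htmem a
  have hb := C.htmem b
  have hε := C.hε
  have hε' := C.hε'
  exact C.inDisk s ⟨by linarith [hs.1, ha.1], by linarith [hs.2, hb.2]⟩

lemma arc_subset_plus (C : TransverseConfig) {a b : Fin C.N} (hab : C.t a < C.t b)
    (h : ∀ s ∈ Ioo (C.t a) (C.t b), 0 < (C.γ s).2) :
    C.γ '' Icc (C.t a) (C.t b) ⊆ closure Dplus := by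
  rintro _ ⟨s, hs, rfl⟩
  refine mem_closure_Dplus (C.arc_in_disk hs) ?_
  rcases eq_or_lt_of_le hs.1 with h1 | h1
  · rw [← h1, γ_apply, C.onL0 a]
  rcases eq_or_lt_of_le hs.2 with h2 | h2
  · rw [h2, γ_apply, C.onL0 b]
  exact (h s ⟨h1, h2⟩).le

lemma arc_subset_minus (C : TransverseConfig) {a b : Fin C.N} (hab : C.t a < C.t b)
    (h : ∀ s ∈ Ioo (C.t a) (C.t b), (C.γ s).2 < 0) :
    C.γ '' Icc (C.t a) (C.t b) ⊆ closure Dminus := by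
  rintro _ ⟨s, hs, rfl⟩
  refine mem_closure_Dminus (C.arc_in_disk hs) ?_
  rcases eq_or_lt_of_le hs.1 with h1 | h1
  · rw [← h1, γ_apply, C.onL0 a]
  rcases eq_or_lt_of_le hs.2 with h2 | h2
  · rw [h2, γ_apply, C.onL0 b]
  exact (h s ⟨h1, h2⟩).le

end TransverseConfig

end Aux

/-- At an interior point of minimal Maslov index, one
neighbour along `L` lies to the left and the other to the right on `L₀`; the
arc towards the left neighbour lies in the closure of `D⁺` and the arc towards
the right neighbour lies in the closure of `D⁻`. -/
theorem minimal_point_shape (C : TransverseConfig) (i : Fin C.N)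
    (hint : interiorIdx C i) (hmin : maslov C i = μmin C) :
    ((C.pt (C.idx (i.val - 1))).1 < (C.pt i).1 ∧
        (C.pt i).1 < (C.pt (C.idx (i.val + 1))).1 ∧
        C.γ '' Icc (C.t (C.idx (i.val - 1))) (C.t i) ⊆ closure Dplus ∧
        C.γ '' Icc (C.t i) (C.t (C.idx (i.val + 1))) ⊆ closure Dminus) ∨
      ((C.pt (C.idx (i.val + 1))).1 < (C.pt i).1 ∧
        (C.pt i).1 < (C.pt (C.idx (i.val - 1))).1 ∧
        C.γ '' Icc (C.t i) (C.t (C.idx (i.val + 1))) ⊆ closure Dplus ∧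
        C.γ '' Icc (C.t (C.idx (i.val - 1))) (C.t i) ⊆ closure Dminus) := by
  obtain ⟨hi0, hiN⟩ := hint
  have hiLt : i.val < C.N := i.isLt
  set j := C.idx (i.val - 1) with hjdef
  set k := C.idx (i.val + 1) with hkdef
  have hjval : j.val = i.val - 1 := by
    simp only [hjdef, TransverseConfig.idx]; omega
  have hkval : k.val = i.val + 1 := by
    simp only [hkdef, TransverseConfig.idx]; omega
  have hji : j < i := by rw [Fin.lt_def, hjval]; omega
  have hik : i < k := by rw [Fin.lt_def, hkval]; omega
  have htji : C.t j < C.t i := C.ht hji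
  have htik : C.t i < C.t k := C.ht hik
  -- telescoping relations
  have hj1 : j.val + 1 < C.N := by omega
  have hej : (⟨j.val + 1, hj1⟩ : Fin C.N) = i := Fin.ext (by show j.val + 1 = i.val; omega)
  have hsum1 : maslov C i = maslov C j + maslovδ C j i := by
    have := C.maslov_succ j hj1
    rwa [hej] at this
  have hi1 : i.val + 1 < C.N := hiN
  have hek : (⟨i.val + 1, hi1⟩ : Fin C.N) = k := Fin.ext (by show i.val + 1 = k.val; omega)
  have hsum2 : maslov C k = maslov C i + maslovδ C i k := by
    have := C.maslov_succ i hi1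
    rwa [hek] at this
  -- minimality
  have hle : ∀ a : Fin C.N, maslov C i ≤ maslov C a := by
    intro a
    rw [hmin]
    exact Finset.inf'_le _ (Finset.mem_univ a)
  -- the if-conditions
  have hδ1 : ¬(((∀ s ∈ Ioo (C.t j) (C.t i), (C.γ s).2 < 0) ∧ (C.pt j).1 < (C.pt i).1) ∨
      ((∀ s ∈ Ioo (C.t j) (C.t i), 0 < (C.γ s).2) ∧ (C.pt i).1 < (C.pt j).1)) := by
    intro hP
    have he1 : maslovδ C j i = 1 := by unfold maslovδ; rw [if_pos hP]
    have hl := hle j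
    omega
  have hδ2 : ((∀ s ∈ Ioo (C.t i) (C.t k), (C.γ s).2 < 0) ∧ (C.pt i).1 < (C.pt k).1) ∨
      ((∀ s ∈ Ioo (C.t i) (C.t k), 0 < (C.γ s).2) ∧ (C.pt k).1 < (C.pt i).1) := by
    by_contra hP
    have he1 : maslovδ C i k = -1 := by unfold maslovδ; rw [if_neg hP]
    have hl := hle k
    omega
  push_neg at hδ1
  obtain ⟨hδ1a, hδ1b⟩ := hδ1
  -- distinct x-coordinates
  have hne : (C.pt j).1 ≠ (C.pt i).1 := C.pt_fst_ne (ne_of_lt htji)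
  -- dichotomy for the left arc
  have harcj := C.arcs j hj1
  rw [hej] at harcj
  have harcj' : (∀ s ∈ Ioo (C.t j) (C.t i), 0 < (C.γ s).2) ∨
      (∀ s ∈ Ioo (C.t j) (C.t i), (C.γ s).2 < 0) := by
    rcases harcj with h | h
    · exact Or.inl fun s hs => h (Set.mem_image_of_mem _ hs)
    · exact Or.inr fun s hs => h (Set.mem_image_of_mem _ hs)
  rcases harcj' with hpos | hneg
  · -- left arc in D⁺ : first alternative
    have hji' : (C.pt j).1 < (C.pt i).1 := by
      rcases lt_trichotomy (C.pt j).1 (C.pt i).1 with h | h | h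
      · exact h
      · exact absurd h hne
      · exact absurd h (not_lt.mpr (hδ1b hpos))
    rcases hδ2 with ⟨hneg2, hik'⟩ | ⟨hpos2, _⟩
    · exact Or.inl ⟨hji', hik', C.arc_subset_plus htji hpos, C.arc_subset_minus htik hneg2⟩
    · exact (C.no_both_pos htji htik hpos hpos2).elim
  · -- left arc in D⁻ : second alternative
    have hij' : (C.pt i).1 < (C.pt j).1 := by
      rcases lt_trichotomy (C.pt i).1 (C.pt j).1 with h | h | h
      · exact h
      · exact absurd h.symm hne
      · exact absurd h (not_lt.mpr (hδ1a hneg))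
    rcases hδ2 with ⟨hneg2, _⟩ | ⟨hpos2, hki'⟩
    · exact (C.no_both_neg htji htik hneg hneg2).elim
    · exact Or.inr ⟨hki', hij', C.arc_subset_plus htik hpos2, C.arc_subset_minus htji hneg⟩

end
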